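/- Let Q1 and Q2 be probability measures on the real line. If Q1 ≤_lr Q2 and Q2 ≤_lr Q1, then Q1 = Q2 (antisymmetry of the likelihood ratio order). -/

import Mathlib

open MeasureTheory Set Filter

noncomputable section

/-- `g` is a (measurable, nonnegative) density of `Q` with respect to `μ`,
i.e. `Q B = ∫_B g dμ` for all Borel sets `B`. -/
def IsDensity (Q μ : Measure ℝ) (g : ℝ → ENNReal) : Prop :=
  Measurable g ∧ ∀ B : Set ℝ, MeasurableSet B → Q B = ∫⁻ x in B, g x ∂μ

/-- Likelihood ratio order `Q1 ≤_lr Q2`: there exist a σ-finite measure `μ` and densities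
`g1 = dQ1/dμ`, `g2 = dQ2/dμ` such that the ratio `g2/g1` (with values in `[0,∞]`)
is nondecreasing on the set `{g1 + g2 > 0}`. -/
def LikelihoodRatioLE (Q1 Q2 : Measure ℝ) : Prop :=
  ∃ (μ : Measure ℝ) (g1 g2 : ℝ → ENNReal), SigmaFinite μ ∧
    IsDensity Q1 μ g1 ∧ IsDensity Q2 μ g2 ∧
    ∀ x y : ℝ, x ≤ y → 0 < g1 x + g2 x → 0 < g1 y + g2 y →
      g2 x / g1 x ≤ g2 y / g1 y

/-
Writing `F₁, F₂` for the distribution functions, monotonicity of `g₂/g₁` gives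
`g₂(x) g₁(y) ≤ g₁(x) g₂(y)` for `x ≤ y`; integrating over `x ≤ t < y` yields
`F₂(t) (1 - F₁(t)) ≤ F₁(t) (1 - F₂(t))`, i.e. `F₂(t) ≤ F₁(t)`. So `Q₁ ≤_lr Q₂` implies that
`Q₂` is stochastically larger than `Q₁`, and the two orders together force `F₁ = F₂`.
-/

theorem ENNReal.mul_le_mul_of_div_le_div {a b c d : ENNReal} (hb : b ≠ ⊤) (hc : c ≠ ⊤)
    (hd : d ≠ ⊤) (h : 0 < b + a → 0 < d + c → a / b ≤ c / d) : a * d ≤ b * c := by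
  rcases eq_or_ne a 0 with rfl | ha0
  · simp
  rcases eq_or_ne d 0 with rfl | hd0
  · simp
  have hdiv := h (pos_iff_ne_zero.2 ha0 |>.trans_le le_add_self)
    (pos_iff_ne_zero.2 hd0 |>.trans_le le_self_add)
  rcases eq_or_ne b 0 with rfl | hb0
  · rw [ENNReal.div_zero ha0, top_le_iff] at hdiv
    exact absurd hdiv (ENNReal.div_lt_top hc hd0).ne
  · rw [ENNReal.div_le_iff hb0 hb] at hdiv
    calc a * d ≤ c / d * b * d := mul_le_mul_left hdiv d
      _ = b * c := by rw [mul_right_comm, ENNReal.div_mul_cancel hd0 hd, mul_comm]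

theorem IsDensity.ae_lt_top {Q μ : Measure ℝ} {g : ℝ → ENNReal} [IsFiniteMeasure Q]
    (hg : IsDensity Q μ g) : ∀ᵐ x ∂μ, g x < ⊤ := by
  refine MeasureTheory.ae_lt_top hg.1 ?_
  rw [← setLIntegral_univ, ← hg.2 univ MeasurableSet.univ]
  exact measure_ne_top Q univ

theorem LikelihoodRatioLE.mul_le_mul {Q1 Q2 : Measure ℝ} [IsFiniteMeasure Q1]
    [IsFiniteMeasure Q2] (h : LikelihoodRatioLE Q1 Q2) {A B : Set ℝ} (hA : MeasurableSet A)
    (hB : MeasurableSet B) (hAB : ∀ x ∈ A, ∀ y ∈ B, x ≤ y) :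
    Q2 A * Q1 B ≤ Q1 A * Q2 B := by
  obtain ⟨μ, g1, g2, -, hg1, hg2, hmono⟩ := h
  have hcross : ∀ᵐ x ∂μ, ∀ᵐ y ∂μ, x ≤ y → g2 x * g1 y ≤ g1 x * g2 y := by
    filter_upwards [hg1.ae_lt_top, hg2.ae_lt_top] with x hx1 hx2
    filter_upwards [hg1.ae_lt_top, hg2.ae_lt_top] with y hy1 hy2 hxy
    exact ENNReal.mul_le_mul_of_div_le_div hx1.ne hy2.ne hy1.ne (hmono x y hxy)
  rw [hg1.2 A hA, hg2.2 A hA, hg1.2 B hB, hg2.2 B hB, ← lintegral_mul_const _ hg2.1,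
    ← lintegral_mul_const _ hg1.1]
  refine setLIntegral_mono_ae (hg1.1.mul_const _).aemeasurable.restrict ?_
  filter_upwards [hcross] with x hx hxA
  rw [← lintegral_const_mul _ hg1.1, ← lintegral_const_mul _ hg2.1]
  refine setLIntegral_mono_ae (hg2.1.const_mul _).aemeasurable.restrict ?_
  filter_upwards [hx] with y hy hyB
  exact hy (hAB x hxA y hyB)

theorem LikelihoodRatioLE.measure_Iic_le {Q1 Q2 : Measure ℝ} [IsProbabilityMeasure Q1]
    [IsProbabilityMeasure Q2] (h : LikelihoodRatioLE Q1 Q2) (t : ℝ) :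
    Q2 (Iic t) ≤ Q1 (Iic t) := by
  have key : Q2 (Iic t) * Q1 (Ioi t) ≤ Q1 (Iic t) * Q2 (Ioi t) :=
    h.mul_le_mul measurableSet_Iic measurableSet_Ioi fun x hx y hy => hx.trans hy.le
  have hsum : ∀ Q : Measure ℝ, [IsProbabilityMeasure Q] → Q (Iic t) + Q (Ioi t) = 1 :=
    fun Q _ => by
      rw [← measure_union (Iic_disjoint_Ioi le_rfl) measurableSet_Ioi, Iic_union_Ioi,
        measure_univ]
  calc Q2 (Iic t) = Q2 (Iic t) * (Q1 (Iic t) + Q1 (Ioi t)) := by rw [hsum Q1, mul_one]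
    _ = Q2 (Iic t) * Q1 (Iic t) + Q2 (Iic t) * Q1 (Ioi t) := mul_add _ _ _
    _ ≤ Q2 (Iic t) * Q1 (Iic t) + Q1 (Iic t) * Q2 (Ioi t) := add_le_add_right key _
    _ = Q1 (Iic t) * (Q2 (Iic t) + Q2 (Ioi t)) := by ring
    _ = Q1 (Iic t) := by rw [hsum Q2, mul_one]

theorem stmt_9 (Q1 Q2 : Measure ℝ) [IsProbabilityMeasure Q1] [IsProbabilityMeasure Q2]
    (h12 : LikelihoodRatioLE Q1 Q2) (h21 : LikelihoodRatioLE Q2 Q1) :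
    Q1 = Q2 :=
  Measure.ext_of_Iic Q1 Q2 fun t => (h21.measure_Iic_le t).antisymm (h12.measure_Iic_le t)
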